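/- Let * be a continuous t-norm and T an algebra of truth values for *. Then Taut([0,1],⊙) ⊆ Taut(T,*) (i.e. the induced logic extends Łukasiewicz logic) if and only if there exists a subset S ⊆ [0,1] with 0, 1 ∈ S, closed under ⊙ and under →_⊙ (where x →_⊙ y = min(1, 1−x+y)), and an isomorphism of truth-value algebras σ : (T,*) → (S,⊙). -/

import Mathlib

open Set

noncomputable section

/-- The real unit interval `[0,1]` as a subset of `ℝ`. -/
def I01 : Set ℝ := Set.Icc 0 1

/-- A continuous t-norm on `[0,1]`. -/
structure ContTNorm where
  mul : ℝ → ℝ → ℝ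
  maps_to : ∀ x ∈ I01, ∀ y ∈ I01, mul x y ∈ I01
  continuousOn : ContinuousOn (fun p : ℝ × ℝ => mul p.1 p.2) (I01 ×ˢ I01)
  assoc : ∀ x ∈ I01, ∀ y ∈ I01, ∀ z ∈ I01, mul (mul x y) z = mul x (mul y z)
  comm : ∀ x ∈ I01, ∀ y ∈ I01, mul x y = mul y x
  mono : ∀ a ∈ I01, ∀ b ∈ I01, ∀ c ∈ I01, b ≤ c → mul a b ≤ mul a c
  one_mul' : ∀ x ∈ I01, mul 1 x = x

/-- The residuum of a t-norm: `x →* y := sup { c ∈ [0,1] | x * c ≤ y }`. -/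
def resid (t : ContTNorm) (x y : ℝ) : ℝ :=
  sSup {c | c ∈ I01 ∧ t.mul x c ≤ y}

/-- An algebra of truth values for the t-norm `t`: a subset of `[0,1]` containing
`0` and `1` and closed under `t.mul` and its residuum. -/
structure TruthAlg (t : ContTNorm) where
  carrier : Set ℝ
  subset : carrier ⊆ I01
  zero_mem : (0:ℝ) ∈ carrier
  one_mem : (1:ℝ) ∈ carrier
  mul_mem : ∀ x ∈ carrier, ∀ y ∈ carrier, t.mul x y ∈ carrier
  resid_mem : ∀ x ∈ carrier, ∀ y ∈ carrier, resid t x y ∈ carrier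

/-- Propositional formulas over countably many variables with `&`, `→`, `⊥`. -/
inductive Formula : Type
  | var : ℕ → Formula
  | bot : Formula
  | conj : Formula → Formula → Formula
  | impl : Formula → Formula → Formula

/-- `α ↔ β := (α → β) & (β → α)`. -/
def Formula.iff (a b : Formula) : Formula := .conj (.impl a b) (.impl b a)

/-- The valuation determined by an assignment `v` of reals to the variables. -/
def eval (t : ContTNorm) (v : ℕ → ℝ) : Formula → ℝ
  | .var i => v i
  | .bot => 0
  | .conj a b => t.mul (eval t v a) (eval t v b)
  | .impl a b => resid t (eval t v a) (eval t v b)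

/-- A valuation into `(T, t)` is (identified with) an assignment of values of `T`
to the propositional variables. -/
def IsValuation (t : ContTNorm) (T : TruthAlg t) (v : ℕ → ℝ) : Prop :=
  ∀ i, v i ∈ T.carrier

/-- The logic induced by `(T, t)`: all formulas true to degree 1 under every valuation. -/
def Taut (t : ContTNorm) (T : TruthAlg t) : Set Formula :=
  {α | ∀ v : ℕ → ℝ, IsValuation t T v → eval t v α = 1}

/-- Principle P1. -/
def P1 (L : Set Formula) : Prop :=
  ∀ (t : ContTNorm) (T : TruthAlg t), Taut t T = L →
    ∀ α β : Formula,
      (Formula.iff α β ∈ L ↔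
        ∀ v : ℕ → ℝ, IsValuation t T v → (eval t v α = 1 ↔ eval t v β = 1))

/-- Principle P2. -/
def P2 (L : Set Formula) : Prop :=
  ∀ (t : ContTNorm) (T : TruthAlg t), Taut t T = L →
    ∀ v w : ℕ → ℝ, IsValuation t T v → IsValuation t T w → v ≠ w →
      ∃ α : Formula, 0 < eval t v α ∧ eval t w α = 0

/-- The Gödel t-norm: minimum. -/
def minT : ContTNorm where
  mul := fun x y => min x y
  maps_to := by
    rintro x ⟨hx0, hx1⟩ y ⟨hy0, hy1⟩
    exact ⟨le_min hx0 hy0, min_le_of_left_le hx1⟩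
  continuousOn := (continuous_fst.min continuous_snd).continuousOn
  assoc := fun x _ y _ z _ => min_assoc x y z
  comm := fun x _ y _ => min_comm x y
  mono := fun a _ b _ c _ h => min_le_min le_rfl h
  one_mul' := by rintro x ⟨hx0, hx1⟩; exact min_eq_right hx1

/-- The Łukasiewicz t-norm: `x ⊙ y = max 0 (x + y - 1)`. -/
def lukT : ContTNorm where
  mul := fun x y => max 0 (x + y - 1)
  maps_to := by
    rintro x ⟨hx0, hx1⟩ y ⟨hy0, hy1⟩
    exact ⟨le_max_left _ _, max_le zero_le_one (by linarith)⟩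
  continuousOn :=
    (continuous_const.max ((continuous_fst.add continuous_snd).sub continuous_const)).continuousOn
  assoc := by
    rintro x ⟨hx0, hx1⟩ y ⟨hy0, hy1⟩ z ⟨hz0, hz1⟩
    simp only [max_def]
    split_ifs <;> linarith
  comm := by intro x _ y _; rw [add_comm]
  mono := by
    rintro a _ b _ c _ h
    exact max_le_max le_rfl (by linarith)
  one_mul' := by
    rintro x ⟨hx0, hx1⟩
    try dsimp only
    rw [show (1:ℝ) + x - 1 = x by ring, max_eq_right hx0]

/-- The product t-norm: ordinary multiplication. -/
def prodT : ContTNorm where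
  mul := fun x y => x * y
  maps_to := by
    rintro x ⟨hx0, hx1⟩ y ⟨hy0, hy1⟩
    exact ⟨mul_nonneg hx0 hy0, by nlinarith⟩
  continuousOn := (continuous_fst.mul continuous_snd).continuousOn
  assoc := fun x _ y _ z _ => mul_assoc x y z
  comm := fun x _ y _ => mul_comm x y
  mono := by rintro a ⟨ha0, _⟩ b _ c _ h; exact mul_le_mul_of_nonneg_left h ha0
  one_mul' := fun x _ => one_mul x

lemma ContTNorm.mul_zero' (t : ContTNorm) {x : ℝ} (hx : x ∈ I01) : t.mul x 0 = 0 := by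
  have h01 : (0:ℝ) ∈ I01 := ⟨le_rfl, zero_le_one⟩
  have h11 : (1:ℝ) ∈ I01 := ⟨zero_le_one, le_rfl⟩
  have h1 : t.mul x 0 = t.mul 0 x := t.comm x hx 0 h01
  have h2 : t.mul 0 x ≤ t.mul 0 1 := t.mono 0 h01 x hx 1 h11 hx.2
  have h3 : t.mul 0 1 = t.mul 1 0 := t.comm 0 h01 1 h11
  have h4 : t.mul 1 0 = 0 := t.one_mul' 0 h01
  have h5 : t.mul x 0 ∈ I01 := t.maps_to x hx 0 h01
  rw [h3, h4] at h2
  rw [h1] at h5 ⊢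
  exact le_antisymm h2 h5.1

lemma resid_mem_I01 (t : ContTNorm) {x y : ℝ} (hx : x ∈ I01) (hy : y ∈ I01) :
    resid t x y ∈ I01 := by
  have h01 : (0:ℝ) ∈ I01 := ⟨le_rfl, zero_le_one⟩
  have h0 : (0:ℝ) ∈ {c | c ∈ I01 ∧ t.mul x c ≤ y} :=
    ⟨h01, by rw [t.mul_zero' hx]; exact hy.1⟩
  have hbdd : BddAbove {c | c ∈ I01 ∧ t.mul x c ≤ y} := ⟨1, fun c hc => hc.1.2⟩
  constructor
  · exact le_csSup hbdd h0
  · exact csSup_le ⟨0, h0⟩ fun c hc => hc.1.2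

/-- The full algebra of truth values `[0,1]` for a t-norm `t`. -/
def fullAlg (t : ContTNorm) : TruthAlg t where
  carrier := I01
  subset := le_rfl
  zero_mem := ⟨le_rfl, zero_le_one⟩
  one_mem := ⟨zero_le_one, le_rfl⟩
  mul_mem := t.maps_to
  resid_mem := fun _ hx _ hy => resid_mem_I01 t hx hy

lemma resid_eq_one_of_le (t : ContTNorm) {x y : ℝ} (hx : x ∈ I01) (hy : y ∈ I01)
    (hxy : x ≤ y) : resid t x y = 1 := by
  have h11 : (1:ℝ) ∈ I01 := ⟨zero_le_one, le_rfl⟩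
  have hmul : t.mul x 1 = x := by rw [t.comm x hx 1 h11]; exact t.one_mul' x hx
  have h1 : (1:ℝ) ∈ {c | c ∈ I01 ∧ t.mul x c ≤ y} := ⟨h11, by rw [hmul]; exact hxy⟩
  have hbdd : BddAbove {c | c ∈ I01 ∧ t.mul x c ≤ y} := ⟨1, fun c hc => hc.1.2⟩
  exact le_antisymm (csSup_le ⟨1, h1⟩ fun c hc => hc.1.2) (le_csSup hbdd h1)

lemma resid_one_zero (t : ContTNorm) : resid t 1 0 = 0 := by
  have : {c | c ∈ I01 ∧ t.mul 1 c ≤ 0} = {0} := by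
    ext c
    constructor
    · rintro ⟨hc, hle⟩
      have := t.one_mul' c hc
      have := hc.1
      simp only [Set.mem_singleton_iff]
      linarith [this, (t.one_mul' c hc) ▸ hle]
    · rintro rfl
      exact ⟨⟨le_rfl, zero_le_one⟩, by rw [t.mul_zero' ⟨zero_le_one, le_rfl⟩]⟩
  rw [resid, this, csSup_singleton]

/-- The two-element algebra of truth values `{0,1}`. -/
def boolAlg (t : ContTNorm) : TruthAlg t where
  carrier := {0, 1}
  subset := by
    rintro x (rfl | rfl)
    · exact ⟨le_rfl, zero_le_one⟩
    · exact ⟨zero_le_one, le_rfl⟩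
  zero_mem := Or.inl rfl
  one_mem := Or.inr rfl
  mul_mem := by
    have h01 : (0:ℝ) ∈ I01 := ⟨le_rfl, zero_le_one⟩
    have h11 : (1:ℝ) ∈ I01 := ⟨zero_le_one, le_rfl⟩
    rintro x (rfl | rfl) y (rfl | rfl)
    · exact Or.inl (t.mul_zero' h01)
    · exact Or.inl (by rw [t.comm 0 h01 1 h11]; exact t.mul_zero' h11)
    · exact Or.inl (t.mul_zero' h11)
    · exact Or.inr (t.one_mul' 1 h11)
  resid_mem := by
    have h01 : (0:ℝ) ∈ I01 := ⟨le_rfl, zero_le_one⟩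
    have h11 : (1:ℝ) ∈ I01 := ⟨zero_le_one, le_rfl⟩
    rintro x (rfl | rfl) y (rfl | rfl)
    · exact Or.inr (resid_eq_one_of_le t h01 h01 le_rfl)
    · exact Or.inr (resid_eq_one_of_le t h01 h11 zero_le_one)
    · exact Or.inl (resid_one_zero t)
    · exact Or.inr (resid_eq_one_of_le t h11 h11 le_rfl)

/-- Classical logic: the logic induced by the two-element algebra `{0,1}`
(this is independent of the chosen continuous t-norm). -/
def ClassicalLogic : Set Formula := Taut minT (boolAlg minT)


/-- An isomorphism of truth-value algebras: an order-preserving bijection of the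
carriers that transforms the first t-norm into the second. -/
def IsTruthIso (t t' : ContTNorm) (S S' : Set ℝ) (σ : ℝ → ℝ) : Prop :=
  Set.BijOn σ S S' ∧
  (∀ a ∈ S, ∀ b ∈ S, a ≤ b → σ a ≤ σ b) ∧
  (∀ a ∈ S, ∀ b ∈ S, σ (t.mul a b) = t'.mul (σ a) (σ b))

/-!
Łukasiewicz logic proves `¬¬φ → φ`, and in `(T, *)` this forces every `x < 1` to be nilpotent.
So either `T = {0, 1}`, or `T` contains a zero divisor `w` and `T \ {1}` lies below the least
idempotent `e ≥ w`. On `[0, e]` the t-norm is nilpotent Archimedean, with an involutive negation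
`¬` and a truncated sum `x ⊕ y = ¬(¬x * ¬y)`. Halving `e` repeatedly for `⊕` and counting how many
copies of the `n`-th half cover `x` gives, after rescaling by `2ⁿ` and passing to the limit, a
length that is additive for `⊕` up to truncation and strictly monotone; normalised, it is an
isomorphism of `[0, e]` onto Łukasiewicz `[0, 1]`. Conversely, an isomorphism onto a Łukasiewicz
algebra also preserves residua, so it turns valuations in `T` into Łukasiewicz valuations.
-/

open Filter Topology

lemma zero_mem_I01 : (0:ℝ) ∈ I01 := ⟨le_rfl, zero_le_one⟩

lemma one_mem_I01 : (1:ℝ) ∈ I01 := ⟨zero_le_one, le_rfl⟩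

lemma tendsto_div_two_pow (c : ℝ) :
    Tendsto (fun n : ℕ => c / 2 ^ n) atTop (𝓝 0) := by
  have := (tendsto_inv_atTop_zero.comp (tendsto_pow_atTop_atTop_of_one_lt one_lt_two)).const_mul c
  simpa only [Function.comp_def, div_eq_mul_inv, mul_zero] using this

namespace ContTNorm

variable (t : ContTNorm) {a b c d x y : ℝ}

lemma mul_one' (hx : x ∈ I01) : t.mul x 1 = x := by
  rw [t.comm x hx 1 one_mem_I01, t.one_mul' x hx]

lemma zero_mul' (hx : x ∈ I01) : t.mul 0 x = 0 := by
  rw [t.comm 0 zero_mem_I01 x hx, t.mul_zero' hx]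

lemma mono_left (ha : a ∈ I01) (hb : b ∈ I01) (hc : c ∈ I01) (h : a ≤ b) :
    t.mul a c ≤ t.mul b c := by
  rw [t.comm a ha c hc, t.comm b hb c hc]
  exact t.mono c hc a ha b hb h

lemma mul_le_mul (ha : a ∈ I01) (hb : b ∈ I01) (hc : c ∈ I01) (hd : d ∈ I01)
    (hab : a ≤ b) (hcd : c ≤ d) : t.mul a c ≤ t.mul b d :=
  (t.mono_left ha hb hc hab).trans (t.mono b hb c hc d hd hcd)

lemma mul_le_left (hx : x ∈ I01) (hy : y ∈ I01) : t.mul x y ≤ x := by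
  simpa only [t.mul_one' hx] using t.mono x hx y hy 1 one_mem_I01 hy.2

lemma mul_le_right (hx : x ∈ I01) (hy : y ∈ I01) : t.mul x y ≤ y := by
  rw [t.comm x hx y hy]
  exact t.mul_le_left hy hx

lemma mul_eq_zero_of_le (hx : x ∈ I01) (hy : y ∈ I01) (h : t.mul x y ≤ 0) : t.mul x y = 0 :=
  le_antisymm h (t.maps_to x hx y hy).1

lemma continuousOn_mul_left (hx : x ∈ I01) : ContinuousOn (t.mul x) I01 :=
  t.continuousOn.comp (continuousOn_const.prodMk continuousOn_id) fun _ hc => mk_mem_prod hx hc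

lemma continuousOn_mul_self : ContinuousOn (fun c => t.mul c c) I01 :=
  t.continuousOn.comp (continuousOn_id.prodMk continuousOn_id) fun _ hc => mk_mem_prod hc hc

lemma exists_gt_mul_lt (hc : c ∈ I01) (hx : x ∈ I01) (hx1 : x < 1) (h : t.mul c x < y) :
    ∃ z ∈ I01, x < z ∧ t.mul c z < y := by
  have := left_nhdsWithin_Ioc_neBot hx1
  have hcont : ContinuousWithinAt (t.mul c) (Ioc x 1) x :=
    (t.continuousOn_mul_left hc x hx).mono fun z hz => ⟨hx.1.trans hz.1.le, hz.2⟩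
  obtain ⟨z, hzy, hz⟩ := ((hcont.eventually (gt_mem_nhds h)).and self_mem_nhdsWithin).exists
  exact ⟨z, ⟨hx.1.trans hz.1.le, hz.2⟩, hz.1, hzy⟩

/-- The supremum defining the residuum is attained, since `t.mul x` is continuous. -/
lemma resid_spec (hx : x ∈ I01) (hy : 0 ≤ y) :
    resid t x y ∈ I01 ∧ t.mul x (resid t x y) ≤ y := by
  have hclosed : IsClosed {c | c ∈ I01 ∧ t.mul x c ≤ y} :=
    (t.continuousOn_mul_left hx).preimage_isClosed_of_isClosed isClosed_Icc isClosed_Iic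
  exact hclosed.csSup_mem ⟨0, zero_mem_I01, by rwa [t.mul_zero' hx]⟩ ⟨1, fun c hc => hc.1.2⟩

lemma mul_resid_le (hx : x ∈ I01) (hy : 0 ≤ y) : t.mul x (resid t x y) ≤ y :=
  (t.resid_spec hx hy).2

lemma le_resid (hc : c ∈ I01) (h : t.mul x c ≤ y) : c ≤ resid t x y :=
  le_csSup ⟨1, fun _ hc => hc.1.2⟩ ⟨hc, h⟩

lemma le_of_resid_eq_one (hx : x ∈ I01) (hy : 0 ≤ y) (h : resid t x y = 1) : x ≤ y := by
  simpa only [h, t.mul_one' hx] using t.mul_resid_le hx hy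

/-- Divisibility: continuity of `t.mul x` makes every `y ≤ x` a multiple of `x`. -/
lemma mul_resid_of_le (hx : x ∈ I01) (hy : y ∈ I01) (hyx : y ≤ x) :
    t.mul x (resid t x y) = y := by
  have hy' : y ∈ Icc (t.mul x 0) (t.mul x 1) := by
    rw [t.mul_zero' hx, t.mul_one' hx]
    exact ⟨hy.1, hyx⟩
  obtain ⟨c, hc, hcy⟩ := intermediate_value_Icc zero_le_one (t.continuousOn_mul_left hx) hy'
  refine le_antisymm (t.mul_resid_le hx hy.1) ?_
  calc y = t.mul x c := hcy.symm
    _ ≤ t.mul x (resid t x y) :=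
      t.mono x hx c hc _ (t.resid_spec hx hy.1).1 (t.le_resid hc hcy.le)

lemma mul_eq_min_of_idem (ha : a ∈ I01) (hidem : t.mul a a = a) (hy : y ∈ I01) :
    t.mul a y = min a y := by
  rcases le_total y a with hya | hay
  · have hr := (t.resid_spec ha hy.1).1
    calc t.mul a y = t.mul a (t.mul a (resid t a y)) := by rw [t.mul_resid_of_le ha hy hya]
      _ = t.mul a (resid t a y) := by rw [← t.assoc a ha a ha _ hr, hidem]
      _ = min a y := by rw [t.mul_resid_of_le ha hy hya, min_eq_right hya]
  · refine le_antisymm (t.mul_le_left ha hy |>.trans (min_eq_left hay).ge) ?_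
    calc min a y = t.mul a a := by rw [min_eq_left hay, hidem]
      _ ≤ t.mul a y := t.mono a ha a ha y hy hay

def npow (x : ℝ) : ℕ → ℝ
  | 0 => 1
  | n + 1 => t.mul (npow x n) x

lemma npow_mem (hx : x ∈ I01) (n : ℕ) : t.npow x n ∈ I01 := by
  induction n with
  | zero => exact one_mem_I01
  | succ n ih => exact t.maps_to _ ih x hx

lemma npow_one (hx : x ∈ I01) : t.npow x 1 = x := t.one_mul' x hx

lemma npow_add (hx : x ∈ I01) (m n : ℕ) :
    t.npow x (m + n) = t.mul (t.npow x m) (t.npow x n) := by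
  induction n with
  | zero => exact (t.mul_one' (t.npow_mem hx m)).symm
  | succ n ih =>
    rw [← Nat.add_assoc, npow, npow, ih, t.assoc _ (t.npow_mem hx m) _ (t.npow_mem hx n) x hx]

lemma npow_antitone (hx : x ∈ I01) : Antitone (t.npow x) :=
  antitone_nat_of_succ_le fun n => t.mul_le_left (t.npow_mem hx n) hx

lemma le_npow_of_idem (ha : a ∈ I01) (hidem : t.mul a a = a) (hx : x ∈ I01) (hax : a ≤ x)
    (n : ℕ) : a ≤ t.npow x n := by
  induction n with
  | zero => exact ha.2
  | succ n ih => exact hidem.ge.trans (t.mul_le_mul ha (t.npow_mem hx n) ha hx ih hax)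

lemma bddBelow_range_npow (hx : x ∈ I01) : BddBelow (range (t.npow x)) :=
  ⟨0, by rintro _ ⟨n, rfl⟩; exact (t.npow_mem hx n).1⟩

lemma iInf_npow_mem (hx : x ∈ I01) : ⨅ n, t.npow x n ∈ I01 :=
  ⟨le_ciInf fun n => (t.npow_mem hx n).1, ciInf_le (t.bddBelow_range_npow hx) 0⟩

lemma iInf_npow_le_self (hx : x ∈ I01) : ⨅ n, t.npow x n ≤ x :=
  (ciInf_le (t.bddBelow_range_npow hx) 1).trans (t.npow_one hx).le

lemma tendsto_npow (hx : x ∈ I01) :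
    Tendsto (t.npow x) atTop (𝓝 (⨅ n, t.npow x n)) :=
  tendsto_atTop_ciInf (t.npow_antitone hx) (t.bddBelow_range_npow hx)

lemma tendsto_mul_of_tendsto {u v : ℕ → ℝ} (hu : ∀ n, u n ∈ I01) (hv : ∀ n, v n ∈ I01)
    (ha : a ∈ I01) (hb : b ∈ I01) (hua : Tendsto u atTop (𝓝 a))
    (hvb : Tendsto v atTop (𝓝 b)) :
    Tendsto (fun n => t.mul (u n) (v n)) atTop (𝓝 (t.mul a b)) := by
  have hcont : ContinuousWithinAt (fun p : ℝ × ℝ => t.mul p.1 p.2) (I01 ×ˢ I01) (a, b) :=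
    t.continuousOn (a, b) (mk_mem_prod ha hb)
  refine hcont.tendsto.comp (f := fun n => (u n, v n)) ?_
  exact tendsto_nhdsWithin_iff.mpr
    ⟨hua.prodMk_nhds hvb, Eventually.of_forall fun n => mk_mem_prod (hu n) (hv n)⟩

lemma mul_self_iInf_npow (hx : x ∈ I01) :
    t.mul (⨅ n, t.npow x n) (⨅ n, t.npow x n) = ⨅ n, t.npow x n := by
  have hlim := t.tendsto_npow hx
  have hsq := t.tendsto_mul_of_tendsto (t.npow_mem hx) (t.npow_mem hx) (t.iInf_npow_mem hx)
    (t.iInf_npow_mem hx) hlim hlim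
  have hdouble : Tendsto (fun n => t.npow x (n + n)) atTop
      (𝓝 (⨅ n, t.npow x n)) :=
    hlim.comp (tendsto_atTop_mono (fun n => Nat.le_add_left n n) tendsto_id)
  have heq : (fun n => t.mul (t.npow x n) (t.npow x n)) = fun n => t.npow x (n + n) :=
    funext fun n => (t.npow_add hx n n).symm
  rw [heq] at hsq
  exact tendsto_nhds_unique hsq hdouble

lemma mul_ne_self_of_tendsto_npow_zero (ha : a ∈ I01) (hx : x ∈ I01) (hapos : 0 < a)
    (hlim : Tendsto (t.npow x) atTop (𝓝 0)) : t.mul a x ≠ a := by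
  intro hfix
  have hpow : ∀ n, t.mul a (t.npow x n) = a := by
    intro n
    induction n with
    | zero => exact t.mul_one' ha
    | succ n ih => rw [npow, ← t.assoc a ha _ (t.npow_mem hx n) x hx, ih, hfix]
  have h := t.tendsto_mul_of_tendsto (fun _ => ha) (t.npow_mem hx) ha zero_mem_I01
    tendsto_const_nhds hlim
  simp only [hpow, t.mul_zero' ha] at h
  exact hapos.ne' (tendsto_nhds_unique tendsto_const_nhds h)

end ContTNorm

/-- `[0, e]` is a nilpotent Archimedean component of `t`. -/
structure NilpComp (t : ContTNorm) where
  e : ℝ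
  e_mem_I01 : e ∈ I01
  e_pos : 0 < e
  mul_self_e : t.mul e e = e
  mul_self_ne : ∀ c, 0 < c → c < e → t.mul c c ≠ c
  w : ℝ
  w_mem : w ∈ Icc 0 e
  w_pos : 0 < w
  mul_self_w : t.mul w w = 0

namespace NilpComp

variable {t : ContTNorm} (C : NilpComp t) {c x y z z' : ℝ} {m : ℕ}

lemma mem_I01 (hx : x ∈ Icc 0 C.e) : x ∈ I01 := ⟨hx.1, hx.2.trans C.e_mem_I01.2⟩

lemma zero_mem : (0:ℝ) ∈ Icc 0 C.e := ⟨le_rfl, C.e_pos.le⟩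

lemma e_mem : C.e ∈ Icc 0 C.e := ⟨C.e_pos.le, le_rfl⟩

lemma e_mul (hy : y ∈ I01) : t.mul C.e y = min C.e y :=
  t.mul_eq_min_of_idem C.e_mem_I01 C.mul_self_e hy

lemma mul_mem (hx : x ∈ Icc 0 C.e) (hy : y ∈ Icc 0 C.e) : t.mul x y ∈ Icc 0 C.e :=
  ⟨(t.maps_to x (C.mem_I01 hx) y (C.mem_I01 hy)).1,
    (t.mul_le_left (C.mem_I01 hx) (C.mem_I01 hy)).trans hx.2⟩

lemma tendsto_npow_zero (hx : x ∈ I01) (hxe : x < C.e) :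
    Tendsto (t.npow x) atTop (𝓝 0) := by
  have hzero : ⨅ n, t.npow x n = 0 := by
    by_contra hne
    exact C.mul_self_ne _ ((t.iInf_npow_mem hx).1.lt_of_ne' hne)
      ((t.iInf_npow_le_self hx).trans_lt hxe) (t.mul_self_iInf_npow hx)
  simpa only [hzero] using t.tendsto_npow hx

lemma exists_npow_eq_zero (hx : x ∈ I01) (hxe : x < C.e) : ∃ n, t.npow x n = 0 := by
  have hwI := C.mem_I01 C.w_mem
  obtain ⟨n, hn⟩ := ((C.tendsto_npow_zero hx hxe).eventually_lt_const C.w_pos).exists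
  refine ⟨n + n, ?_⟩
  rw [t.npow_add hx]
  refine t.mul_eq_zero_of_le (t.npow_mem hx n) (t.npow_mem hx n) ?_
  calc t.mul (t.npow x n) (t.npow x n) ≤ t.mul C.w C.w :=
        t.mul_le_mul (t.npow_mem hx n) hwI (t.npow_mem hx n) hwI hn.le hn.le
    _ = 0 := C.mul_self_w

lemma mul_ne_self (hy : y ∈ I01) (hypos : 0 < y) (hx : x ∈ I01) (hxe : x < C.e) :
    t.mul y x ≠ y :=
  t.mul_ne_self_of_tendsto_npow_zero hy hx hypos (C.tendsto_npow_zero hx hxe)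

/-- `¬x = x → 0`, except `¬0 = e` (not `0 → 0 = 1`), which keeps `neg` an involution of
`[0, e]`. -/
def neg (x : ℝ) : ℝ := if x ≤ 0 then C.e else resid t x 0

lemma neg_zero : C.neg 0 = C.e := if_pos le_rfl

lemma neg_of_pos (hx : 0 < x) : C.neg x = resid t x 0 := if_neg hx.not_ge

lemma mul_neg_self (hx : x ∈ Icc 0 C.e) : t.mul x (C.neg x) = 0 := by
  rcases hx.1.eq_or_lt with rfl | hxpos
  · rw [neg_zero, t.zero_mul' C.e_mem_I01]
  · rw [C.neg_of_pos hxpos]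
    exact t.mul_eq_zero_of_le (C.mem_I01 hx) (t.resid_spec (C.mem_I01 hx) le_rfl).1
      (t.mul_resid_le (C.mem_I01 hx) le_rfl)

lemma le_neg_iff (hx : x ∈ Icc 0 C.e) (hxpos : 0 < x) (hc : c ∈ I01) :
    c ≤ C.neg x ↔ t.mul x c = 0 := by
  rw [C.neg_of_pos hxpos]
  refine ⟨fun h => t.mul_eq_zero_of_le (C.mem_I01 hx) hc ?_, fun h => t.le_resid hc h.le⟩
  calc t.mul x c ≤ t.mul x (resid t x 0) :=
        t.mono x (C.mem_I01 hx) c hc _ (t.resid_spec (C.mem_I01 hx) le_rfl).1 h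
    _ ≤ 0 := t.mul_resid_le (C.mem_I01 hx) le_rfl

lemma neg_lt_e (hx : x ∈ Icc 0 C.e) (hxpos : 0 < x) : C.neg x < C.e := by
  have hxI := C.mem_I01 hx
  by_contra! h
  have hmono := t.mono x hxI C.e C.e_mem_I01 _ (C.neg_of_pos hxpos ▸ t.resid_spec hxI le_rfl).1 h
  rw [t.comm x hxI C.e C.e_mem_I01, C.e_mul hxI, min_eq_right hx.2, C.mul_neg_self hx] at hmono
  exact hxpos.not_ge hmono

lemma neg_mem (hx : x ∈ Icc 0 C.e) : C.neg x ∈ Icc 0 C.e := by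
  rcases hx.1.eq_or_lt with rfl | hxpos
  · rw [neg_zero]
    exact C.e_mem
  · exact ⟨(C.neg_of_pos hxpos ▸ t.resid_spec (C.mem_I01 hx) le_rfl).1.1,
      (C.neg_lt_e hx hxpos).le⟩

lemma neg_e : C.neg C.e = 0 := by
  have h := C.mul_neg_self C.e_mem
  rwa [C.e_mul (C.mem_I01 (C.neg_mem C.e_mem)), min_eq_right (C.neg_mem C.e_mem).2] at h

lemma neg_pos (hx : x ∈ Icc 0 C.e) (hxe : x < C.e) : 0 < C.neg x := by
  rcases hx.1.eq_or_lt with rfl | hxpos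
  · rw [neg_zero]
    exact C.e_pos
  have hxI := C.mem_I01 hx
  refine (C.neg_mem hx).1.lt_of_ne fun hneg => ?_
  have hcancel : ∀ c ∈ I01, t.mul x c = 0 → c ≤ 0 := fun c hc h =>
    hneg ▸ (C.le_neg_iff hx hxpos hc).2 h
  have hpos : ∀ n, 0 < t.npow x n := by
    intro n
    induction n with
    | zero => exact one_pos
    | succ n ih =>
      refine (t.npow_mem hxI (n + 1)).1.lt_of_ne fun h =>
        ih.not_ge (hcancel _ (t.npow_mem hxI n) ?_)
      rw [t.comm x hxI _ (t.npow_mem hxI n)]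
      exact h.symm
  obtain ⟨n, hn⟩ := C.exists_npow_eq_zero hxI hxe
  exact (hpos n).ne' hn

lemma neg_antitone (hx : x ∈ Icc 0 C.e) (hy : y ∈ Icc 0 C.e) (hxy : x ≤ y) :
    C.neg y ≤ C.neg x := by
  rcases hx.1.eq_or_lt with rfl | hxpos
  · rw [neg_zero]
    exact (C.neg_mem hy).2
  rw [C.le_neg_iff hx hxpos (C.mem_I01 (C.neg_mem hy))]
  refine t.mul_eq_zero_of_le (C.mem_I01 hx) (C.mem_I01 (C.neg_mem hy)) ?_
  calc t.mul x (C.neg y) ≤ t.mul y (C.neg y) :=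
        t.mono_left (C.mem_I01 hx) (C.mem_I01 hy) (C.mem_I01 (C.neg_mem hy)) hxy
    _ = 0 := C.mul_neg_self hy

lemma le_neg_neg (hx : x ∈ Icc 0 C.e) (hxe : x < C.e) : x ≤ C.neg (C.neg x) := by
  rw [C.le_neg_iff (C.neg_mem hx) (C.neg_pos hx hxe) (C.mem_I01 hx),
    t.comm _ (C.mem_I01 (C.neg_mem hx)) x (C.mem_I01 hx)]
  exact C.mul_neg_self hx

/-- If `x < ¬¬x`, write `x = ¬¬x * c`; then `c * ¬x < ¬x` because `c` is below `e`, and by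
continuity some `z > ¬x` still has `x * z ≤ ¬¬x * ¬x = 0`, contradicting `z > ¬x`. -/
lemma neg_neg (hx : x ∈ Icc 0 C.e) : C.neg (C.neg x) = x := by
  rcases hx.1.eq_or_lt with rfl | hxpos
  · rw [neg_zero, neg_e]
  rcases hx.2.eq_or_lt with rfl | hxe
  · rw [neg_e, neg_zero]
  have hxI := C.mem_I01 hx
  set m := C.neg x
  have hm : m ∈ Icc 0 C.e := C.neg_mem hx
  have hmI := C.mem_I01 hm
  have hmpos : 0 < m := C.neg_pos hx hxe
  have hx' : C.neg m ∈ Icc 0 C.e := C.neg_mem hm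
  have hx'I := C.mem_I01 hx'
  refine ((C.le_neg_neg hx hxe).antisymm ?_).symm
  by_contra! hlt
  set c := resid t (C.neg m) x
  have hcI : c ∈ I01 := (t.resid_spec hx'I hx.1).1
  have hcx : t.mul (C.neg m) c = x := t.mul_resid_of_le hx'I hxI hlt.le
  have hce : c < C.e := by
    by_contra! hce
    have h := t.mono _ hx'I C.e C.e_mem_I01 c hcI hce
    rw [hcx, t.comm _ hx'I C.e C.e_mem_I01, C.e_mul hx'I, min_eq_right hx'.2] at h
    exact hlt.not_ge h
  have hcm : t.mul c m < m := by
    refine (t.mul_le_right hcI hmI).lt_of_ne ?_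
    rw [t.comm c hcI m hmI]
    exact C.mul_ne_self hmI hmpos hcI hce
  obtain ⟨z, hzI, hmz, hcz⟩ :=
    t.exists_gt_mul_lt hcI hmI ((C.neg_lt_e hx hxpos).trans_le C.e_mem_I01.2) hcm
  have hxz : t.mul x z = 0 := by
    refine t.mul_eq_zero_of_le hxI hzI ?_
    calc t.mul x z = t.mul (C.neg m) (t.mul c z) := by rw [← hcx, t.assoc _ hx'I c hcI z hzI]
      _ ≤ t.mul (C.neg m) m := t.mono _ hx'I _ (t.maps_to c hcI z hzI) m hmI hcz.le
      _ = 0 := by rw [t.comm _ hx'I m hmI, C.mul_neg_self hm]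
  exact hmz.not_ge ((C.le_neg_iff hx hxpos hzI).2 hxz)

/-- The truncated sum, the counterpart of `min 1 (x + y)` on `[0, 1]`. -/
def oplus (x y : ℝ) : ℝ := C.neg (t.mul (C.neg x) (C.neg y))

lemma oplus_mem (hx : x ∈ Icc 0 C.e) (hy : y ∈ Icc 0 C.e) : C.oplus x y ∈ Icc 0 C.e :=
  C.neg_mem (C.mul_mem (C.neg_mem hx) (C.neg_mem hy))

lemma neg_oplus (hx : x ∈ Icc 0 C.e) (hy : y ∈ Icc 0 C.e) :
    C.neg (C.oplus x y) = t.mul (C.neg x) (C.neg y) :=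
  C.neg_neg (C.mul_mem (C.neg_mem hx) (C.neg_mem hy))

lemma mul_eq_neg_oplus (hx : x ∈ Icc 0 C.e) (hy : y ∈ Icc 0 C.e) :
    t.mul x y = C.neg (C.oplus (C.neg x) (C.neg y)) := by
  rw [C.neg_oplus (C.neg_mem hx) (C.neg_mem hy), C.neg_neg hx, C.neg_neg hy]

lemma zero_oplus (hy : y ∈ Icc 0 C.e) : C.oplus 0 y = y := by
  rw [oplus, neg_zero, C.e_mul (C.mem_I01 (C.neg_mem hy)), min_eq_right (C.neg_mem hy).2,
    C.neg_neg hy]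

lemma oplus_zero (hy : y ∈ Icc 0 C.e) : C.oplus y 0 = y := by
  rw [oplus, t.comm _ (C.mem_I01 (C.neg_mem hy)) _ (C.mem_I01 (C.neg_mem C.zero_mem))]
  exact C.zero_oplus hy

lemma oplus_assoc (hx : x ∈ Icc 0 C.e) (hy : y ∈ Icc 0 C.e) (hz : z ∈ Icc 0 C.e) :
    C.oplus (C.oplus x y) z = C.oplus x (C.oplus y z) := by
  change C.neg (t.mul (C.neg (C.oplus x y)) (C.neg z))
    = C.neg (t.mul (C.neg x) (C.neg (C.oplus y z)))
  rw [C.neg_oplus hx hy, C.neg_oplus hy hz,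
    t.assoc _ (C.mem_I01 (C.neg_mem hx)) _ (C.mem_I01 (C.neg_mem hy)) _ (C.mem_I01 (C.neg_mem hz))]

lemma oplus_mono {x' y' : ℝ} (hx : x ∈ Icc 0 C.e) (hx' : x' ∈ Icc 0 C.e) (hy : y ∈ Icc 0 C.e)
    (hy' : y' ∈ Icc 0 C.e) (hxx' : x ≤ x') (hyy' : y ≤ y') : C.oplus x y ≤ C.oplus x' y' :=
  C.neg_antitone (C.mul_mem (C.neg_mem hx') (C.neg_mem hy'))
    (C.mul_mem (C.neg_mem hx) (C.neg_mem hy))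
    (t.mul_le_mul (C.mem_I01 (C.neg_mem hx')) (C.mem_I01 (C.neg_mem hx))
      (C.mem_I01 (C.neg_mem hy')) (C.mem_I01 (C.neg_mem hy))
      (C.neg_antitone hx hx' hxx') (C.neg_antitone hy hy' hyy'))

lemma le_oplus (hx : x ∈ Icc 0 C.e) (hy : y ∈ Icc 0 C.e) : x ≤ C.oplus x y := by
  simpa only [C.oplus_zero hx] using C.oplus_mono hx hx C.zero_mem hy le_rfl hy.1

lemma lt_oplus (hx : x ∈ Icc 0 C.e) (hxe : x < C.e) (hy : y ∈ Icc 0 C.e) (hypos : 0 < y) :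
    x < C.oplus x y := by
  refine (C.le_oplus hx hy).lt_of_ne fun h => ?_
  refine C.mul_ne_self (C.mem_I01 (C.neg_mem hx)) (C.neg_pos hx hxe) (C.mem_I01 (C.neg_mem hy))
    (C.neg_lt_e hy hypos) ?_
  rw [← C.neg_oplus hx hy, ← h]

lemma oplus_neg_self (hx : x ∈ Icc 0 C.e) : C.oplus x (C.neg x) = C.e := by
  rw [oplus, C.neg_neg hx, t.comm _ (C.mem_I01 (C.neg_mem hx)) _ (C.mem_I01 hx),
    C.mul_neg_self hx, neg_zero]

lemma neg_le_of_oplus_eq_e (hx : x ∈ Icc 0 C.e) (hy : y ∈ Icc 0 C.e) (h : C.oplus x y = C.e) :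
    C.neg x ≤ y := by
  have hmul : t.mul (C.neg x) (C.neg y) = 0 := by rw [← C.neg_oplus hx hy, h, neg_e]
  rcases (C.neg_mem hy).1.eq_or_lt with h0 | hpos
  · rw [← C.neg_neg hy, ← h0, neg_zero]
    exact (C.neg_mem hx).2
  · rw [← C.neg_neg hy, C.le_neg_iff (C.neg_mem hy) hpos (C.mem_I01 (C.neg_mem hx)),
      t.comm _ (C.mem_I01 (C.neg_mem hy)) _ (C.mem_I01 (C.neg_mem hx)), hmul]

def nsmul (z : ℝ) : ℕ → ℝ
  | 0 => 0
  | n + 1 => C.oplus (nsmul z n) z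

lemma nsmul_zero : C.nsmul z 0 = 0 := rfl

lemma nsmul_succ (n : ℕ) : C.nsmul z (n + 1) = C.oplus (C.nsmul z n) z := rfl

lemma nsmul_mem (hz : z ∈ Icc 0 C.e) (n : ℕ) : C.nsmul z n ∈ Icc 0 C.e := by
  induction n with
  | zero => exact C.zero_mem
  | succ n ih => exact C.oplus_mem ih hz

lemma nsmul_one (hz : z ∈ Icc 0 C.e) : C.nsmul z 1 = z := C.zero_oplus hz

lemma nsmul_monotone (hz : z ∈ Icc 0 C.e) : Monotone (C.nsmul z) :=
  monotone_nat_of_le_succ fun n => C.le_oplus (C.nsmul_mem hz n) hz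

lemma nsmul_lt_nsmul_succ (hz : z ∈ Icc 0 C.e) (hzpos : 0 < z) {n : ℕ} (hn : C.nsmul z n < C.e) :
    C.nsmul z n < C.nsmul z (n + 1) :=
  C.lt_oplus (C.nsmul_mem hz n) hn hz hzpos

lemma nsmul_add (hz : z ∈ Icc 0 C.e) (m n : ℕ) :
    C.nsmul z (m + n) = C.oplus (C.nsmul z m) (C.nsmul z n) := by
  induction n with
  | zero => exact (C.oplus_zero (C.nsmul_mem hz m)).symm
  | succ n ih =>
    rw [← Nat.add_assoc, nsmul_succ, nsmul_succ, ih,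
      C.oplus_assoc (C.nsmul_mem hz m) (C.nsmul_mem hz n) hz]

lemma nsmul_oplus_self (hz : z ∈ Icc 0 C.e) (n : ℕ) :
    C.nsmul (C.oplus z z) n = C.nsmul z (2 * n) := by
  induction n with
  | zero => rfl
  | succ n ih =>
    rw [nsmul_succ, ih, Nat.mul_succ, C.nsmul_add hz, C.nsmul_add hz 1 1, C.nsmul_one hz]

lemma neg_nsmul_succ (hz : z ∈ Icc 0 C.e) (n : ℕ) :
    C.neg (C.nsmul z (n + 1)) = t.npow (C.neg z) (n + 1) := by
  induction n with
  | zero => rw [C.nsmul_one hz, t.npow_one (C.mem_I01 (C.neg_mem hz))]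
  | succ n ih => rw [nsmul_succ, C.neg_oplus (C.nsmul_mem hz _) hz, ih]; rfl

/-- `¬(n • z) = (¬z)ⁿ`, and `¬z < e` is nilpotent. -/
lemma exists_nsmul_eq_e (hz : z ∈ Icc 0 C.e) (hzpos : 0 < z) : ∃ n, C.nsmul z n = C.e := by
  have hnz := C.mem_I01 (C.neg_mem hz)
  obtain ⟨n, hn⟩ := C.exists_npow_eq_zero hnz (C.neg_lt_e hz hzpos)
  have hzero : t.npow (C.neg z) (n + 1) = 0 := by
    rw [ContTNorm.npow, hn, t.zero_mul' hnz]
  refine ⟨n + 1, ?_⟩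
  rw [← C.neg_neg (C.nsmul_mem hz (n + 1)), C.neg_nsmul_succ hz, hzero, neg_zero]

def ceilDiv (z x : ℝ) : ℕ := sInf {m | x ≤ C.nsmul z m}

lemma le_nsmul_ceilDiv (hz : z ∈ Icc 0 C.e) (hzpos : 0 < z) (hx : x ≤ C.e) :
    x ≤ C.nsmul z (C.ceilDiv z x) := by
  obtain ⟨n, hn⟩ := C.exists_nsmul_eq_e hz hzpos
  exact Nat.sInf_mem (s := {m | x ≤ C.nsmul z m}) ⟨n, hx.trans hn.ge⟩

lemma ceilDiv_le (h : x ≤ C.nsmul z m) : C.ceilDiv z x ≤ m := Nat.sInf_le h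

lemma nsmul_lt_of_lt_ceilDiv (hm : m < C.ceilDiv z x) : C.nsmul z m < x :=
  not_le.mp (Nat.notMem_of_lt_sInf hm)

lemma ceilDiv_zero : C.ceilDiv z 0 = 0 :=
  Nat.le_zero.mp (C.ceilDiv_le C.nsmul_zero.ge)

lemma nsmul_pred_ceilDiv_le (hx : 0 ≤ x) : C.nsmul z (C.ceilDiv z x - 1) ≤ x := by
  rcases Nat.eq_zero_or_pos (C.ceilDiv z x) with h0 | hpos
  · rwa [h0, Nat.zero_sub, nsmul_zero]
  · exact (C.nsmul_lt_of_lt_ceilDiv (Nat.sub_lt hpos one_pos)).le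

lemma ceilDiv_mono (hz : z ∈ Icc 0 C.e) (hzpos : 0 < z) (hxy : x ≤ y) (hy : y ≤ C.e) :
    C.ceilDiv z x ≤ C.ceilDiv z y :=
  C.ceilDiv_le (hxy.trans (C.le_nsmul_ceilDiv hz hzpos hy))

lemma nsmul_eq_e_of_ceilDiv_le (hz : z ∈ Icc 0 C.e) (hzpos : 0 < z) (hm : C.ceilDiv z C.e ≤ m) :
    C.nsmul z m = C.e :=
  le_antisymm (C.nsmul_mem hz m).2
    ((C.le_nsmul_ceilDiv hz hzpos le_rfl).trans (C.nsmul_monotone hz hm))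

lemma two_le_ceilDiv (hz : z ∈ Icc 0 C.e) (hzpos : 0 < z) (hzx : z < x) (hx : x ≤ C.e) :
    2 ≤ C.ceilDiv z x := by
  by_contra! h
  have hle := (C.le_nsmul_ceilDiv hz hzpos hx).trans (C.nsmul_monotone hz (Nat.lt_succ_iff.mp h))
  rw [C.nsmul_one hz] at hle
  exact hzx.not_ge hle

/-- `m ↦ m • z` increases strictly until it reaches `e`. -/
lemma min_le_ceilDiv (hz : z ∈ Icc 0 C.e) (hzpos : 0 < z) (hy : y ≤ C.e) (hm : C.nsmul z m ≤ y) :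
    min (C.ceilDiv z C.e) m ≤ C.ceilDiv z y := by
  by_contra! h
  set k := C.ceilDiv z y
  have hke : C.nsmul z k < C.e := C.nsmul_lt_of_lt_ceilDiv (lt_of_lt_of_le h (min_le_left _ _))
  have hkm : k + 1 ≤ m := lt_of_lt_of_le h (min_le_right _ _)
  have := (C.nsmul_monotone hz hkm).trans (hm.trans (C.le_nsmul_ceilDiv hz hzpos hy))
  exact (C.nsmul_lt_nsmul_succ hz hzpos hke).not_ge this

lemma ceilDiv_oplus_le (hz : z ∈ Icc 0 C.e) (hzpos : 0 < z) (hx : x ∈ Icc 0 C.e)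
    (hy : y ∈ Icc 0 C.e) :
    C.ceilDiv z (C.oplus x y) ≤ C.ceilDiv z x + C.ceilDiv z y := by
  refine C.ceilDiv_le ?_
  rw [C.nsmul_add hz]
  exact C.oplus_mono hx (C.nsmul_mem hz _) hy (C.nsmul_mem hz _)
    (C.le_nsmul_ceilDiv hz hzpos hx.2) (C.le_nsmul_ceilDiv hz hzpos hy.2)

lemma le_ceilDiv_oplus (hz : z ∈ Icc 0 C.e) (hzpos : 0 < z) (hx : x ∈ Icc 0 C.e)
    (hy : y ∈ Icc 0 C.e) :
    min (C.ceilDiv z C.e) (C.ceilDiv z x + C.ceilDiv z y) ≤ C.ceilDiv z (C.oplus x y) + 2 := by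
  have hle : C.nsmul z ((C.ceilDiv z x - 1) + (C.ceilDiv z y - 1)) ≤ C.oplus x y := by
    rw [C.nsmul_add hz]
    exact C.oplus_mono (C.nsmul_mem hz _) hx (C.nsmul_mem hz _) hy
      (C.nsmul_pred_ceilDiv_le hx.1) (C.nsmul_pred_ceilDiv_le hy.1)
  have := C.min_le_ceilDiv hz hzpos (C.oplus_mem hx hy).2 hle
  omega

/-- With `b = ceilDiv z ¬x` and `o = ceilDiv z e`: `(b - 1) • z ≤ ¬x` and
`(b - 1) • z ⊕ (o - b + 1) • z = e`, so `x = ¬¬x ≤ (o - b + 1) • z`. -/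
lemma ceilDiv_add_ceilDiv_neg_le (hz : z ∈ Icc 0 C.e) (hzpos : 0 < z) (hx : x ∈ Icc 0 C.e) :
    C.ceilDiv z x + C.ceilDiv z (C.neg x) ≤ C.ceilDiv z C.e + 1 := by
  set o := C.ceilDiv z C.e
  set b := C.ceilDiv z (C.neg x)
  have hbo : b ≤ o := C.ceilDiv_mono hz hzpos (C.neg_mem hx).2 le_rfl
  have hsum : C.oplus (C.nsmul z (b - 1)) (C.nsmul z (o - (b - 1))) = C.e := by
    rw [← C.nsmul_add hz]
    exact C.nsmul_eq_e_of_ceilDiv_le hz hzpos (by omega)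
  have hcover : x ≤ C.nsmul z (o - (b - 1)) := by
    calc x = C.neg (C.neg x) := (C.neg_neg hx).symm
      _ ≤ C.neg (C.nsmul z (b - 1)) := C.neg_antitone (C.nsmul_mem hz _) (C.neg_mem hx)
          (C.nsmul_pred_ceilDiv_le (C.neg_mem hx).1)
      _ ≤ C.nsmul z (o - (b - 1)) :=
          C.neg_le_of_oplus_eq_e (C.nsmul_mem hz _) (C.nsmul_mem hz _) hsum
  have := C.ceilDiv_le hcover
  omega

lemma ceilDiv_le_two_mul (hz : z ∈ Icc 0 C.e) (hzpos : 0 < z) (hhalf : C.oplus z' z' = z)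
    (hz' : z' ∈ Icc 0 C.e) (hx : x ≤ C.e) :
    C.ceilDiv z' x ≤ 2 * C.ceilDiv z x := by
  refine C.ceilDiv_le ?_
  rw [← C.nsmul_oplus_self hz', hhalf]
  exact C.le_nsmul_ceilDiv hz hzpos hx

lemma two_mul_ceilDiv_le (hhalf : C.oplus z' z' = z) (hz' : z' ∈ Icc 0 C.e) (hz'pos : 0 < z')
    (hx : x ≤ C.e) : 2 * C.ceilDiv z x ≤ C.ceilDiv z' x + 1 := by
  have hcover : x ≤ C.nsmul z ((C.ceilDiv z' x + 1) / 2) := by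
    rw [← hhalf, C.nsmul_oplus_self hz']
    exact (C.le_nsmul_ceilDiv hz' hz'pos hx).trans (C.nsmul_monotone hz' (by omega))
  have := C.ceilDiv_le hcover
  omega

/-- `¬u ⊕ ¬u = ¬(u * u)`, and `u * u` takes the value `¬y` for some `u ∈ [w, e]`. -/
lemma exists_half (hy : y ∈ Icc 0 C.e) (hypos : 0 < y) :
    ∃ z ∈ Icc 0 C.e, 0 < z ∧ z < C.e ∧ C.oplus z z = y := by
  have hivt : C.neg y ∈ Icc (t.mul C.w C.w) (t.mul C.e C.e) := by
    rw [C.mul_self_w, C.mul_self_e]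
    exact C.neg_mem hy
  obtain ⟨u, hu, huu⟩ := intermediate_value_Icc C.w_mem.2
    (t.continuousOn_mul_self.mono fun c hc => C.mem_I01 ⟨C.w_mem.1.trans hc.1, hc.2⟩) hivt
  replace huu : t.mul u u = C.neg y := huu
  have hupos : 0 < u := C.w_pos.trans_le hu.1
  have hu' : u ∈ Icc 0 C.e := ⟨hupos.le, hu.2⟩
  have hue : u < C.e := by
    refine hu.2.lt_of_ne fun hue => hypos.ne' ?_
    rw [← C.neg_neg hy, ← huu, hue, C.mul_self_e, neg_e]
  refine ⟨C.neg u, C.neg_mem hu', C.neg_pos hu' hue, C.neg_lt_e hu' hupos, ?_⟩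
  rw [oplus, C.neg_neg hu', huu, C.neg_neg hy]

structure IsHalving (h : ℕ → ℝ) : Prop where
  mem : ∀ n, h n ∈ Icc 0 C.e
  pos : ∀ n, 0 < h n
  one_lt : h 1 < C.e
  oplus_self : ∀ n, C.oplus (h (n + 1)) (h (n + 1)) = h n

lemma exists_isHalving : ∃ h, C.IsHalving h := by
  have hhalf : ∀ y ∈ Icc 0 C.e, 0 < y → ∃ z ∈ Icc 0 C.e, 0 < z ∧ z < C.e ∧ C.oplus z z = y :=
    fun _ hy hypos => C.exists_half hy hypos
  choose! half hmem hpos hlt hhalf using hhalf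
  have key : ∀ n, half^[n] C.e ∈ Icc 0 C.e ∧ 0 < half^[n] C.e := by
    intro n
    induction n with
    | zero => exact ⟨C.e_mem, C.e_pos⟩
    | succ n ih =>
      rw [Function.iterate_succ_apply']
      exact ⟨hmem _ ih.1 ih.2, hpos _ ih.1 ih.2⟩
  refine ⟨fun n => half^[n] C.e, fun n => (key n).1, fun n => (key n).2,
    hlt _ C.e_mem C.e_pos, fun n => ?_⟩
  simp only [Function.iterate_succ_apply']
  exact hhalf _ (key n).1 (key n).2

/-- The length of `x` in units of `h n`, rescaled by `2 ^ n`. -/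
def approx (h : ℕ → ℝ) (n : ℕ) (x : ℝ) : ℝ := C.ceilDiv (h n) x / 2 ^ n

def length (h : ℕ → ℝ) (x : ℝ) : ℝ := ⨅ n, C.approx h n x

namespace IsHalving

variable {C} {h : ℕ → ℝ} (hh : C.IsHalving h)
include hh

lemma approx_antitone (hx : x ≤ C.e) : Antitone fun n => C.approx h n x := by
  refine antitone_nat_of_succ_le fun n => ?_
  have hle : (C.ceilDiv (h (n + 1)) x : ℝ) ≤ 2 * C.ceilDiv (h n) x := by
    exact_mod_cast C.ceilDiv_le_two_mul (hh.mem n) (hh.pos n) (hh.oplus_self n) (hh.mem (n + 1)) hx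
  calc C.approx h (n + 1) x ≤ 2 * C.ceilDiv (h n) x / 2 ^ (n + 1) := by
        rw [approx]; gcongr
    _ = C.approx h n x := by rw [approx, pow_succ]; ring

lemma approx_sub_monotone (hx : x ≤ C.e) : Monotone fun n => C.approx h n x - 1 / 2 ^ n := by
  refine monotone_nat_of_le_succ fun n => ?_
  have hle : 2 * (C.ceilDiv (h n) x : ℝ) ≤ C.ceilDiv (h (n + 1)) x + 1 := by
    exact_mod_cast C.two_mul_ceilDiv_le (hh.oplus_self n) (hh.mem (n + 1)) (hh.pos (n + 1)) hx
  calc C.approx h n x - 1 / 2 ^ n = (2 * C.ceilDiv (h n) x - 2) / 2 ^ (n + 1) := by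
        rw [approx, pow_succ]; ring
    _ ≤ (C.ceilDiv (h (n + 1)) x + 1 - 2) / 2 ^ (n + 1) := by gcongr
    _ = C.approx h (n + 1) x - 1 / 2 ^ (n + 1) := by rw [approx]; ring

lemma tendsto_approx (hx : x ≤ C.e) :
    Tendsto (fun n => C.approx h n x) atTop (𝓝 (C.length h x)) :=
  tendsto_atTop_ciInf (hh.approx_antitone hx)
    ⟨0, by rintro _ ⟨n, rfl⟩; simp only [approx]; positivity⟩

lemma approx_sub_le_length (hx : x ≤ C.e) (n : ℕ) :
    C.approx h n x - 1 / 2 ^ n ≤ C.length h x := by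
  refine (hh.approx_sub_monotone hx).ge_of_tendsto ?_ n
  simpa only [sub_zero] using (hh.tendsto_approx hx).sub (tendsto_div_two_pow 1)

omit hh in
lemma length_zero : C.length h 0 = 0 := by
  simp only [length, approx, ceilDiv_zero, Nat.cast_zero, zero_div, ciInf_const]

lemma length_mono (hxy : x ≤ y) (hy : y ≤ C.e) : C.length h x ≤ C.length h y := by
  refine le_of_tendsto_of_tendsto' (hh.tendsto_approx (hxy.trans hy)) (hh.tendsto_approx hy)
    fun n => ?_
  rw [approx, approx]
  gcongr
  exact C.ceilDiv_mono (hh.mem n) (hh.pos n) hxy hy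

/-- A positive limit `l` of the antitone sequence `h` would satisfy `l ⊕ l ≤ l`. -/
lemma tendsto_zero : Tendsto h atTop (𝓝 0) := by
  have hanti : Antitone h := antitone_nat_of_succ_le fun n =>
    hh.oplus_self n ▸ C.le_oplus (hh.mem (n + 1)) (hh.mem (n + 1))
  have hbdd : BddBelow (range h) := ⟨0, by rintro _ ⟨n, rfl⟩; exact (hh.pos n).le⟩
  suffices hinf : ⨅ n, h n = 0 by simpa only [hinf] using tendsto_atTop_ciInf hanti hbdd
  set l := ⨅ n, h n
  have hle : ∀ n, l ≤ h n := ciInf_le hbdd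
  have hl : l ∈ Icc 0 C.e := ⟨le_ciInf fun n => (hh.pos n).le, (hle 0).trans (hh.mem 0).2⟩
  rcases hl.1.eq_or_lt with h0 | hlpos
  · exact h0.symm
  have hll : C.oplus l l ≤ l := le_ciInf fun n =>
    hh.oplus_self n ▸ C.oplus_mono hl (hh.mem _) hl (hh.mem _) (hle _) (hle _)
  exact absurd hll (C.lt_oplus hl ((hle 1).trans_lt hh.one_lt) hl hlpos).not_ge

lemma length_pos (hx : x ∈ Icc 0 C.e) (hxpos : 0 < x) : 0 < C.length h x := by
  obtain ⟨n, hn⟩ := (hh.tendsto_zero.eventually_lt_const hxpos).exists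
  have htwo : (2 : ℝ) ≤ C.ceilDiv (h n) x := by
    exact_mod_cast C.two_le_ceilDiv (hh.mem n) (hh.pos n) hn hx.2
  have happrox : 2 / 2 ^ n ≤ C.approx h n x := by
    rw [approx]
    gcongr
  calc (0 : ℝ) < 1 / 2 ^ n := by positivity
    _ ≤ C.approx h n x - 1 / 2 ^ n := by
        linarith [show (2 : ℝ) / 2 ^ n = 1 / 2 ^ n + 1 / 2 ^ n by ring]
    _ ≤ C.length h x := hh.approx_sub_le_length hx.2 n

lemma length_oplus (hx : x ∈ Icc 0 C.e) (hy : y ∈ Icc 0 C.e) :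
    C.length h (C.oplus x y) = min (C.length h C.e) (C.length h x + C.length h y) := by
  have hxy := C.oplus_mem hx hy
  refine le_antisymm (le_min (hh.length_mono hxy.2 le_rfl) ?_) ?_
  · refine le_of_tendsto_of_tendsto' (hh.tendsto_approx hxy.2)
      ((hh.tendsto_approx hx.2).add (hh.tendsto_approx hy.2)) fun n => ?_
    rw [approx, approx, approx, ← add_div]
    gcongr
    exact_mod_cast C.ceilDiv_oplus_le (hh.mem n) (hh.pos n) hx hy
  · refine le_of_tendsto_of_tendsto' ((hh.tendsto_approx le_rfl).min
      ((hh.tendsto_approx hx.2).add (hh.tendsto_approx hy.2)))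
      (by simpa only [add_zero] using (hh.tendsto_approx hxy.2).add (tendsto_div_two_pow 2))
      fun n => ?_
    rw [approx, approx, approx, approx, ← add_div, min_div_div_right (by positivity), ← add_div]
    gcongr
    exact_mod_cast C.le_ceilDiv_oplus (hh.mem n) (hh.pos n) hx hy

lemma length_neg (hx : x ∈ Icc 0 C.e) :
    C.length h (C.neg x) = C.length h C.e - C.length h x := by
  have hnx := C.neg_mem hx
  have hge : C.length h C.e ≤ C.length h x + C.length h (C.neg x) := by
    have := hh.length_oplus hx hnx
    rw [C.oplus_neg_self hx] at this
    exact (le_min_iff.mp this.le).2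
  have hle : C.length h x + C.length h (C.neg x) ≤ C.length h C.e := by
    refine le_of_tendsto_of_tendsto' ((hh.tendsto_approx hx.2).add (hh.tendsto_approx hnx.2))
      (by simpa only [add_zero] using (hh.tendsto_approx le_rfl).add (tendsto_div_two_pow 1))
      fun n => ?_
    rw [approx, approx, approx, ← add_div, ← add_div]
    exact div_le_div_of_nonneg_right
      (by exact_mod_cast C.ceilDiv_add_ceilDiv_neg_le (hh.mem n) (hh.pos n) hx) (by positivity)
  linarith

lemma length_mul (hx : x ∈ Icc 0 C.e) (hy : y ∈ Icc 0 C.e) :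
    C.length h (t.mul x y) = max 0 (C.length h x + C.length h y - C.length h C.e) := by
  rw [C.mul_eq_neg_oplus hx hy, hh.length_neg (C.oplus_mem (C.neg_mem hx) (C.neg_mem hy)),
    hh.length_oplus (C.neg_mem hx) (C.neg_mem hy), hh.length_neg hx, hh.length_neg hy]
  rcases le_total (C.length h C.e) (C.length h x + C.length h y) with hc | hc
  · rw [min_eq_right (by linarith), max_eq_right (by linarith)]
    ring
  · rw [min_eq_left (by linarith), max_eq_left (by linarith), sub_self]

/-- For `x < y`, the element `y * ¬x` is positive and has length `length y - length x`. -/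
lemma length_strictMonoOn : StrictMonoOn (C.length h) (Icc 0 C.e) := by
  intro x hx y hy hxy
  have hxe := hxy.trans_le hy.2
  have hd := C.mul_mem hy (C.neg_mem hx)
  have hdpos : 0 < t.mul y (C.neg x) := by
    refine hd.1.lt_of_ne fun h0 => hxy.not_ge ?_
    rw [← C.neg_neg hx, C.le_neg_iff (C.neg_mem hx) (C.neg_pos hx hxe) (C.mem_I01 hy),
      t.comm _ (C.mem_I01 (C.neg_mem hx)) _ (C.mem_I01 hy), h0]
  have hlen := hh.length_pos hd hdpos
  rw [hh.length_mul hy (C.neg_mem hx), hh.length_neg hx] at hlen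
  by_contra! hle
  exact hlen.ne' (max_eq_left (by linarith))

end IsHalving

theorem exists_iso_lukT : ∃ Φ : ℝ → ℝ, Φ 0 = 0 ∧ Φ C.e = 1 ∧ StrictMonoOn Φ (Icc 0 C.e) ∧
    (∀ x ∈ Icc 0 C.e, ∀ y ∈ Icc 0 C.e, Φ (t.mul x y) = lukT.mul (Φ x) (Φ y)) ∧
    ∀ x ∈ Icc 0 C.e, Φ (C.neg x) = 1 - Φ x := by
  obtain ⟨h, hh⟩ := C.exists_isHalving
  have hL : 0 < C.length h C.e := hh.length_pos C.e_mem C.e_pos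
  refine ⟨fun x => C.length h x / C.length h C.e, by simp only [IsHalving.length_zero, zero_div],
    div_self hL.ne',
    fun x hx y hy hxy => div_lt_div_of_pos_right (hh.length_strictMonoOn hx hy hxy) hL,
    fun x hx y hy => ?_, fun x hx => ?_⟩
  · change C.length h (t.mul x y) / C.length h C.e =
      max 0 (C.length h x / C.length h C.e + C.length h y / C.length h C.e - 1)
    rw [hh.length_mul hx hy, ← max_div_div_right hL.le, zero_div]
    congr 1
    field_simp
  · change C.length h (C.neg x) / C.length h C.e = 1 - C.length h x / C.length h C.e
    rw [hh.length_neg hx, sub_div, div_self hL.ne']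

lemma lt_e_of_npow_eq_zero {n : ℕ} (hx : x ∈ I01) (hn : t.npow x n = 0) : x < C.e := by
  by_contra! hex
  exact C.e_pos.not_ge (hn ▸ t.le_npow_of_idem C.e_mem_I01 C.mul_self_e hx hex n)

end NilpComp

namespace ContTNorm

variable (t : ContTNorm) {x : ℝ}

/-- The least idempotent above a zero divisor `w` bounds a nilpotent component. -/
lemma nonempty_nilpComp {w : ℝ} (hw : w ∈ I01) (hwpos : 0 < w) (hww : t.mul w w = 0) :
    Nonempty (NilpComp t) := by
  set D := Icc w 1 ∩ (fun c => t.mul c c - c) ⁻¹' {0}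
  have hDsub : Icc w 1 ⊆ I01 := fun c hc => ⟨hw.1.trans hc.1, hc.2⟩
  have hD : ∀ c, c ∈ D ↔ c ∈ Icc w 1 ∧ t.mul c c = c := fun c => by
    simp only [D, mem_inter_iff, mem_preimage, mem_singleton_iff, sub_eq_zero]
  have hclosed : IsClosed D := ((t.continuousOn_mul_self.sub continuousOn_id).mono hDsub)
    |>.preimage_isClosed_of_isClosed isClosed_Icc isClosed_singleton
  have hbdd : BddBelow D := ⟨w, fun c hc => hc.1.1⟩
  have h1 : (1 : ℝ) ∈ D := (hD 1).2 ⟨⟨hw.2, le_rfl⟩, t.one_mul' 1 one_mem_I01⟩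
  obtain ⟨⟨hwe, he1⟩, hee⟩ := (hD _).1 (hclosed.csInf_mem ⟨1, h1⟩ hbdd)
  refine ⟨⟨sInf D, ⟨hw.1.trans hwe, he1⟩, hwpos.trans_le hwe, hee, fun c hcpos hce hcc => ?_,
    w, ⟨hw.1, hwe⟩, hwpos, hww⟩⟩
  have hcI : c ∈ I01 := ⟨hcpos.le, hce.le.trans he1⟩
  rcases lt_or_ge c w with hcw | hwc
  · refine hcpos.ne' (le_antisymm ?_ hcI.1)
    calc c = t.mul c c := hcc.symm
      _ ≤ t.mul w w := t.mul_le_mul hcI hw hcI hw hcw.le hcw.le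
      _ = 0 := hww
  · exact hce.not_ge (csInf_le hbdd ((hD c).2 ⟨⟨hwc, hcI.2⟩, hcc⟩))

lemma resid_zero_pos_of_resid_resid_le (hx : x ∈ I01) (hx1 : x < 1)
    (hdn : resid t (resid t x 0) 0 ≤ x) : 0 < resid t x 0 := by
  refine (t.resid_spec hx le_rfl).1.1.lt_of_ne fun h0 => hx1.not_ge ?_
  rwa [← h0, resid_eq_one_of_le t zero_mem_I01 zero_mem_I01 le_rfl] at hdn

/-- The idempotent `a = inf xⁿ` satisfies `a * ¬x ≤ x * ¬x = 0`, so `a < ¬x`, and then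
`xⁿ⁺¹ ≤ ¬x * x = 0` for some `n`. -/
lemma exists_npow_eq_zero_of_resid_resid_le (hx : x ∈ I01) (hx1 : x < 1)
    (hdn : resid t (resid t x 0) 0 ≤ x) : ∃ n, t.npow x n = 0 := by
  set y := resid t x 0
  have hyI : y ∈ I01 := (t.resid_spec hx le_rfl).1
  have hypos : 0 < y := t.resid_zero_pos_of_resid_resid_le hx hx1 hdn
  have hxy : t.mul x y = 0 := t.mul_eq_zero_of_le hx hyI (t.mul_resid_le hx le_rfl)
  have haI := t.iInf_npow_mem hx
  have hay : ⨅ n, t.npow x n < y := by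
    by_contra! hya
    have hle := t.mono_left haI hx hyI (t.iInf_npow_le_self hx)
    rw [t.mul_eq_min_of_idem haI (t.mul_self_iInf_npow hx) hyI, min_eq_right hya, hxy] at hle
    exact hypos.not_ge hle
  obtain ⟨n, hn⟩ := exists_lt_of_ciInf_lt hay
  refine ⟨n + 1, t.mul_eq_zero_of_le (t.npow_mem hx n) hx ?_⟩
  calc t.mul (t.npow x n) x ≤ t.mul y x := t.mono_left (t.npow_mem hx n) hyI hx hn.le
    _ = 0 := by rw [t.comm y hyI x hx, hxy]

end ContTNorm

lemma lukT_mul (x y : ℝ) : lukT.mul x y = max 0 (x + y - 1) := rfl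

lemma resid_lukT {x y : ℝ} (hx : x ∈ I01) (hy : y ∈ I01) :
    resid lukT x y = min 1 (1 - x + y) := by
  have hmin : min 1 (1 - x + y) ∈ I01 :=
    ⟨le_min zero_le_one (by linarith [hx.2, hy.1]), min_le_left _ _⟩
  obtain ⟨hrI, hr⟩ := lukT.resid_spec hx hy.1
  rw [lukT_mul] at hr
  refine le_antisymm (le_min hrI.2 (by linarith [le_max_right 0 (x + resid lukT x y - 1)]))
    (lukT.le_resid hmin ?_)
  rw [lukT_mul]
  exact max_le hy.1 (by linarith [min_le_right 1 (1 - x + y)])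

structure IsLukEmbedding (t : ContTNorm) (T : TruthAlg t) (σ : ℝ → ℝ) : Prop where
  strictMonoOn : StrictMonoOn σ T.carrier
  map_zero : σ 0 = 0
  map_one : σ 1 = 1
  map_mul : ∀ a ∈ T.carrier, ∀ b ∈ T.carrier, σ (t.mul a b) = lukT.mul (σ a) (σ b)
  map_neg : ∀ a ∈ T.carrier, σ (resid t a 0) = 1 - σ a

namespace IsLukEmbedding

variable {t : ContTNorm} {T : TruthAlg t} {σ : ℝ → ℝ} (hσ : IsLukEmbedding t T σ) {a b : ℝ}
include hσ

lemma mem_I01 (ha : a ∈ T.carrier) : σ a ∈ I01 :=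
  ⟨hσ.map_zero ▸ hσ.strictMonoOn.monotoneOn T.zero_mem ha (T.subset ha).1,
    hσ.map_one ▸ hσ.strictMonoOn.monotoneOn ha T.one_mem (T.subset ha).2⟩

/-- For `b < a`, divisibility `a * (a → b) = b` determines `σ (a → b)` unless `⊙` truncates,
which happens only for `b = 0`. -/
lemma map_resid (ha : a ∈ T.carrier) (hb : b ∈ T.carrier) :
    σ (resid t a b) = min 1 (1 - σ a + σ b) := by
  have haI := T.subset ha
  have hbI := T.subset hb
  rcases le_or_gt a b with hab | hba
  · rw [resid_eq_one_of_le t haI hbI hab, hσ.map_one,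
      min_eq_left (by linarith [hσ.strictMonoOn.monotoneOn ha hb hab])]
  rw [min_eq_right (by linarith [hσ.strictMonoOn hb ha hba])]
  rcases hbI.1.eq_or_lt with rfl | hbpos
  · rw [hσ.map_neg a ha, hσ.map_zero, add_zero]
  have hσb : 0 < σ b := hσ.map_zero ▸ hσ.strictMonoOn T.zero_mem hb hbpos
  have hdiv := hσ.map_mul a ha _ (T.resid_mem a ha b hb)
  rw [t.mul_resid_of_le haI hbI hba.le, lukT_mul] at hdiv
  rcases le_total (σ a + σ (resid t a b) - 1) 0 with h | h
  · rw [max_eq_left h] at hdiv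
    linarith
  · rw [max_eq_right h] at hdiv
    linarith

theorem exists_isTruthIso :
    ∃ S : Set ℝ, S ⊆ I01 ∧ (0:ℝ) ∈ S ∧ (1:ℝ) ∈ S ∧
      (∀ x ∈ S, ∀ y ∈ S, lukT.mul x y ∈ S) ∧
      (∀ x ∈ S, ∀ y ∈ S, min 1 (1 - x + y) ∈ S) ∧
      ∃ σ : ℝ → ℝ, IsTruthIso t lukT T.carrier S σ := by
  refine ⟨σ '' T.carrier, ?_, ⟨0, T.zero_mem, hσ.map_zero⟩, ⟨1, T.one_mem, hσ.map_one⟩, ?_, ?_,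
    σ, ⟨mapsTo_image _ _, hσ.strictMonoOn.injOn, Subset.rfl⟩,
    fun a ha b hb hab => hσ.strictMonoOn.monotoneOn ha hb hab, hσ.map_mul⟩
  · rintro _ ⟨a, ha, rfl⟩
    exact hσ.mem_I01 ha
  · rintro _ ⟨a, ha, rfl⟩ _ ⟨b, hb, rfl⟩
    exact ⟨_, T.mul_mem a ha b hb, hσ.map_mul a ha b hb⟩
  · rintro _ ⟨a, ha, rfl⟩ _ ⟨b, hb, rfl⟩
    exact ⟨_, T.resid_mem a ha b hb, hσ.map_resid ha hb⟩

end IsLukEmbedding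

lemma isLukEmbedding_id {t : ContTNorm} {T : TruthAlg t} (hT : ∀ x ∈ T.carrier, x = 0 ∨ x = 1) :
    IsLukEmbedding t T id where
  strictMonoOn := strictMonoOn_id
  map_zero := rfl
  map_one := rfl
  map_mul a ha b hb := by
    rcases hT a ha with rfl | rfl <;> rcases hT b hb with rfl | rfl <;>
      norm_num [lukT_mul, t.mul_zero', t.zero_mul', t.one_mul', zero_mem_I01, one_mem_I01]
  map_neg a ha := by
    rcases hT a ha with rfl | rfl
    · simp [resid_eq_one_of_le t zero_mem_I01 zero_mem_I01 le_rfl]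
    · simp [resid_one_zero]

/-- Extend the isomorphism of `[0, e]` by `1 ↦ 1`. -/
lemma NilpComp.exists_isLukEmbedding {t : ContTNorm} {T : TruthAlg t} (C : NilpComp t)
    (hT : ∀ x ∈ T.carrier, x ≠ 1 → x < C.e) : ∃ σ, IsLukEmbedding t T σ := by
  obtain ⟨Φ, hΦ0, hΦe, hΦmono, hΦmul, hΦneg⟩ := C.exists_iso_lukT
  have hmem : ∀ x ∈ T.carrier, x ≠ 1 → x ∈ Icc 0 C.e :=
    fun x hx hx1 => ⟨(T.subset hx).1, (hT x hx hx1).le⟩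
  have hΦlt : ∀ x ∈ T.carrier, x ≠ 1 → Φ x < 1 :=
    fun x hx hx1 => hΦe ▸ hΦmono (hmem x hx hx1) C.e_mem (hT x hx hx1)
  set σ : ℝ → ℝ := fun x => if x = 1 then 1 else Φ x
  have hσ1 : σ 1 = 1 := if_pos rfl
  have hσΦ : ∀ x, x ≠ 1 → σ x = Φ x := fun x hx1 => if_neg hx1
  have hσ0 : σ 0 = 0 := (hσΦ 0 zero_ne_one).trans hΦ0
  have hσI : ∀ x ∈ T.carrier, σ x ∈ I01 := fun x hx => by
    rcases eq_or_ne x 1 with rfl | hx1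
    · rw [hσ1]
      exact one_mem_I01
    · exact hσΦ x hx1 ▸ ⟨hΦ0 ▸ hΦmono.monotoneOn C.zero_mem (hmem x hx hx1) (T.subset hx).1,
        (hΦlt x hx hx1).le⟩
  refine ⟨σ, ⟨fun x hx y hy hxy => ?_, hσ0, hσ1, fun a ha b hb => ?_, fun a ha => ?_⟩⟩
  · have hx1 : x ≠ 1 := (hxy.trans_le (T.subset hy).2).ne
    rcases eq_or_ne y 1 with rfl | hy1
    · rw [hσ1, hσΦ x hx1]
      exact hΦlt x hx hx1
    · exact hσΦ x hx1 ▸ hσΦ y hy1 ▸ hΦmono (hmem x hx hx1) (hmem y hy hy1) hxy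
  · rcases eq_or_ne a 1 with rfl | ha1
    · rw [t.one_mul' b (T.subset hb), hσ1, lukT.one_mul' _ (hσI b hb)]
    rcases eq_or_ne b 1 with rfl | hb1
    · rw [t.mul_one' (T.subset ha), hσ1, lukT.mul_one' (hσI a ha)]
    have hab : t.mul a b ≠ 1 :=
      ((t.mul_le_left (T.subset ha) (T.subset hb)).trans_lt ((T.subset ha).2.lt_of_ne ha1)).ne
    rw [hσΦ _ hab, hσΦ a ha1, hσΦ b hb1]
    exact hΦmul a (hmem a ha ha1) b (hmem b hb hb1)
  · rcases eq_or_ne a 1 with rfl | ha1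
    · rw [resid_one_zero, hσ0, hσ1, sub_self]
    rcases (T.subset ha).1.eq_or_lt with rfl | hapos
    · rw [resid_eq_one_of_le t zero_mem_I01 zero_mem_I01 le_rfl, hσ0, hσ1, sub_zero]
    have ha' := hmem a ha ha1
    have hneg1 : C.neg a ≠ 1 := ((C.neg_lt_e ha' hapos).trans_le C.e_mem_I01.2).ne
    rw [← C.neg_of_pos hapos, hσΦ _ hneg1, hσΦ a ha1, hΦneg a ha']

/-- Unless `T = {0, 1}`, `T` has an element `0 < p < 1`, and `min p ¬p` is a zero divisor;
all elements `x < 1` of `T` are nilpotent, hence below the idempotent `e` of its component. -/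
lemma exists_isLukEmbedding {t : ContTNorm} {T : TruthAlg t}
    (hdn : ∀ x ∈ T.carrier, resid t (resid t x 0) 0 ≤ x) : ∃ σ, IsLukEmbedding t T σ := by
  by_cases htriv : ∀ x ∈ T.carrier, x = 0 ∨ x = 1
  · exact ⟨id, isLukEmbedding_id htriv⟩
  obtain ⟨p, hpT, hp⟩ := not_forall₂.mp htriv
  obtain ⟨hp0, hp1⟩ := not_or.mp hp
  have hpI := T.subset hpT
  have hplt : p < 1 := hpI.2.lt_of_ne hp1
  have hqI := (t.resid_spec hpI le_rfl).1
  have hqpos := t.resid_zero_pos_of_resid_resid_le hpI hplt (hdn p hpT)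
  have hwI : min p (resid t p 0) ∈ I01 := ⟨le_min hpI.1 hqI.1, (min_le_left _ _).trans hpI.2⟩
  have hww : t.mul (min p (resid t p 0)) (min p (resid t p 0)) = 0 := by
    refine t.mul_eq_zero_of_le hwI hwI ((t.mul_le_mul hwI hpI hwI hqI (min_le_left _ _)
      (min_le_right _ _)).trans (t.mul_resid_le hpI le_rfl))
  obtain ⟨C⟩ := t.nonempty_nilpComp hwI (lt_min (hpI.1.lt_of_ne (Ne.symm hp0)) hqpos) hww
  refine C.exists_isLukEmbedding fun x hx hx1 => ?_
  have hxI := T.subset hx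
  obtain ⟨n, hn⟩ :=
    t.exists_npow_eq_zero_of_resid_resid_le hxI (hxI.2.lt_of_ne hx1) (hdn x hx)
  exact C.lt_e_of_npow_eq_zero hxI hn

lemma eval_mem {t : ContTNorm} {T : TruthAlg t} {v : ℕ → ℝ} (hv : IsValuation t T v)
    (α : Formula) : eval t v α ∈ T.carrier := by
  induction α with
  | var i => exact hv i
  | bot => exact T.zero_mem
  | conj _ _ iha ihb => exact T.mul_mem _ iha _ ihb
  | impl _ _ iha ihb => exact T.resid_mem _ iha _ ihb

lemma dneg_mem_taut_lukT :
    Formula.impl (.impl (.impl (.var 0) .bot) .bot) (.var 0) ∈ Taut lukT (fullAlg lukT) := by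
  intro v hv
  have hx : v 0 ∈ I01 := hv 0
  have hnx : 1 - v 0 ∈ I01 := ⟨by linarith [hx.2], by linarith [hx.1]⟩
  change resid lukT (resid lukT (resid lukT (v 0) 0) 0) (v 0) = 1
  rw [resid_lukT hx zero_mem_I01, add_zero, min_eq_right (by linarith [hx.1]),
    resid_lukT hnx zero_mem_I01, add_zero, sub_sub_cancel, min_eq_right hx.2,
    resid_lukT hx hx, min_eq_left (by linarith)]

lemma resid_resid_zero_le_of_taut_subset {t : ContTNorm} {T : TruthAlg t} {x : ℝ}
    (H : Taut lukT (fullAlg lukT) ⊆ Taut t T) (hx : x ∈ T.carrier) :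
    resid t (resid t x 0) 0 ≤ x := by
  have hnx := resid_mem_I01 t (T.subset hx) zero_mem_I01
  exact t.le_of_resid_eq_one (resid_mem_I01 t hnx zero_mem_I01) (T.subset hx).1
    (H dneg_mem_taut_lukT (fun _ => x) fun _ => hx)

namespace IsTruthIso

variable {t : ContTNorm} {T : TruthAlg t} {S : Set ℝ} {σ : ℝ → ℝ}
  (hσ : IsTruthIso t lukT T.carrier S σ) (hS : S ⊆ I01) {a b : ℝ}
include hσ

lemma le_of_map_le (ha : a ∈ T.carrier) (hb : b ∈ T.carrier) (h : σ a ≤ σ b) : a ≤ b := by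
  by_contra! hba
  exact hba.ne' (hσ.1.injOn ha hb (le_antisymm h (hσ.2.1 b hb a ha hba.le)))

include hS

lemma map_zero (h0 : (0:ℝ) ∈ S) : σ 0 = 0 := by
  obtain ⟨c, hc, hc0⟩ := hσ.1.surjOn h0
  exact le_antisymm (hc0 ▸ hσ.2.1 0 T.zero_mem c hc (T.subset hc).1) (hS (hσ.1.mapsTo T.zero_mem)).1

lemma map_one (h1 : (1:ℝ) ∈ S) : σ 1 = 1 := by
  obtain ⟨c, hc, hc1⟩ := hσ.1.surjOn h1
  exact le_antisymm (hS (hσ.1.mapsTo T.one_mem)).2 (hc1 ▸ hσ.2.1 c hc 1 T.one_mem (T.subset hc).2)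

/-- `σ (a → b)` is the largest `σ c` with `σ a ⊙ σ c ≤ σ b`, and `S` contains the Łukasiewicz
residuum, which is the largest such value in `[0, 1]`. -/
lemma map_resid (hres : ∀ x ∈ S, ∀ y ∈ S, min 1 (1 - x + y) ∈ S) (ha : a ∈ T.carrier)
    (hb : b ∈ T.carrier) : σ (resid t a b) = resid lukT (σ a) (σ b) := by
  have haI := T.subset ha
  have hbI := T.subset hb
  have hσa := hS (hσ.1.mapsTo ha)
  have hσb := hS (hσ.1.mapsTo hb)
  have hr := T.resid_mem a ha b hb
  rw [resid_lukT hσa hσb]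
  refine le_antisymm (le_min (hS (hσ.1.mapsTo hr)).2 ?_) ?_
  · have hle := hσ.2.1 _ (T.mul_mem a ha _ hr) b hb (t.mul_resid_le haI hbI.1)
    rw [hσ.2.2 a ha _ hr, lukT_mul] at hle
    linarith [le_max_right 0 (σ a + σ (resid t a b) - 1)]
  · obtain ⟨c, hc, hcσ⟩ := hσ.1.surjOn (hres _ (hσ.1.mapsTo ha) _ (hσ.1.mapsTo hb))
    have hle : σ (t.mul a c) ≤ σ b := by
      rw [hσ.2.2 a ha c hc, hcσ, lukT_mul]
      exact max_le hσb.1 (by linarith [min_le_right 1 (1 - σ a + σ b)])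
    rw [← hcσ]
    exact hσ.2.1 c hc _ hr (t.le_resid (T.subset hc) (hσ.le_of_map_le (T.mul_mem a ha c hc) hb hle))

lemma map_eval (h0 : (0:ℝ) ∈ S) (hres : ∀ x ∈ S, ∀ y ∈ S, min 1 (1 - x + y) ∈ S) {v : ℕ → ℝ}
    (hv : IsValuation t T v) (α : Formula) : σ (eval t v α) = eval lukT (σ ∘ v) α := by
  induction α with
  | var i => rfl
  | bot => exact hσ.map_zero hS h0
  | conj α β ihα ihβ =>
    rw [eval, hσ.2.2 _ (eval_mem hv α) _ (eval_mem hv β), ihα, ihβ, eval]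
  | impl α β ihα ihβ =>
    rw [eval, hσ.map_resid hS hres (eval_mem hv α) (eval_mem hv β), ihα, ihβ, eval]

theorem taut_subset (h0 : (0:ℝ) ∈ S) (h1 : (1:ℝ) ∈ S)
    (hres : ∀ x ∈ S, ∀ y ∈ S, min 1 (1 - x + y) ∈ S) : Taut lukT (fullAlg lukT) ⊆ Taut t T := by
  intro α hα v hv
  have hone := hα (σ ∘ v) fun i => hS (hσ.1.mapsTo (hv i))
  rw [← hσ.map_eval hS h0 hres hv, ← hσ.map_one hS h1] at hone
  exact hσ.1.injOn (eval_mem hv α) T.one_mem hone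

end IsTruthIso

/-- The logic of `(T, t)` extends Łukasiewicz logic iff `(T, t)` is isomorphic to an
algebra of truth values for the Łukasiewicz t-norm. -/
theorem extends_Lukasiewicz_iff_iso (t : ContTNorm) (T : TruthAlg t) :
    Taut lukT (fullAlg lukT) ⊆ Taut t T ↔
      ∃ S : Set ℝ, S ⊆ I01 ∧ (0:ℝ) ∈ S ∧ (1:ℝ) ∈ S ∧
        (∀ x ∈ S, ∀ y ∈ S, lukT.mul x y ∈ S) ∧
        (∀ x ∈ S, ∀ y ∈ S, min 1 (1 - x + y) ∈ S) ∧
        ∃ σ : ℝ → ℝ, IsTruthIso t lukT T.carrier S σ := by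
  constructor
  · intro H
    obtain ⟨σ, hσ⟩ := exists_isLukEmbedding fun x hx => resid_resid_zero_le_of_taut_subset H hx
    exact hσ.exists_isTruthIso
  · rintro ⟨S, hS, h0, h1, -, hres, σ, hσ⟩
    exact hσ.taut_subset hS h0 h1 hres

end
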